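/- arXiv:2406.05072 — 3 statements merged into one kernel-verified Lean document; each statement's English description precedes it below -/
import Mathlib

section
/- Let V be a real vector space, L ⊆ V^# a subspace separating points, and suppose D ⊆ L satisfies: there exists n₀ ∈ ℕ such that the n₀-fold weak-* sequential closure of span D equals L. If u : Ω → V is a map on a probability space such that ℓ ∘ u is measurable for every ℓ ∈ D, then u is 𝒜-σ(L)-measurable. -/
/-!
The functionals `ℓ` for which `ℓ ∘ u` is measurable form a linear subspace, closed under
pointwise sequential limits since a pointwise limit of real measurable functions is measurable.
So it contains `span D`, all its iterated weak-* sequential closures, and hence `L`; and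
`σ(L)`-measurability of `u` means exactly that `ℓ ∘ u` is measurable for every `ℓ ∈ L`.
-/

/-- Weak-* sequential closure of a set of linear functionals: all functionals that are
pointwise limits (on `V`) of sequences from `S`. -/
def scl {V : Type*} [AddCommGroup V] [Module ℝ V]
    (S : Set (Module.Dual ℝ V)) : Set (Module.Dual ℝ V) :=
  {ℓ | ∃ g : ℕ → Module.Dual ℝ V, (∀ n, g n ∈ S) ∧
    ∀ v, Filter.Tendsto (fun n => g n v) Filter.atTop (nhds (ℓ v))}

theorem measurable_biSup_comap_iff {ι α β γ : Type*} [MeasurableSpace α] [MeasurableSpace γ]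
    (s : Set ι) (f : ι → β → γ) (u : α → β) :
    @Measurable α β _ (⨆ i ∈ s, MeasurableSpace.comap (f i) inferInstance) u ↔
      ∀ i ∈ s, Measurable (f i ∘ u) := by
  simp only [measurable_iff_comap_le, MeasurableSpace.comap_iSup, iSup_le_iff,
    MeasurableSpace.comap_comp]

section MeasurableFunctionals

variable {V Ω : Type*} [AddCommGroup V] [Module ℝ V] [MeasurableSpace Ω]

def measurableFunctionals (u : Ω → V) : Submodule ℝ (Module.Dual ℝ V) where
  carrier := {ℓ | Measurable fun ω => ℓ (u ω)}
  add_mem' hℓ hℓ' := hℓ.add hℓ'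
  zero_mem' := measurable_const
  smul_mem' c _ hℓ := hℓ.const_mul c

theorem scl_subset_measurableFunctionals {u : Ω → V} {S : Set (Module.Dual ℝ V)}
    (hS : S ⊆ measurableFunctionals u) : scl S ⊆ measurableFunctionals u := by
  rintro ℓ ⟨g, hgS, hlim⟩
  exact measurable_of_tendsto_metrizable' Filter.atTop (fun n => hS (hgS n))
    (tendsto_pi_nhds.mpr fun ω => hlim (u ω))

theorem iterate_scl_subset_measurableFunctionals {u : Ω → V} {S : Set (Module.Dual ℝ V)}
    (hS : S ⊆ measurableFunctionals u) (n : ℕ) : scl^[n] S ⊆ measurableFunctionals u := by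
  induction n with
  | zero => exact hS
  | succ n ih =>
    rw [Function.iterate_succ_apply']
    exact scl_subset_measurableFunctionals ih

end MeasurableFunctionals

theorem stmt5_general {V Ω : Type*} [AddCommGroup V] [Module ℝ V] [MeasurableSpace Ω]
    (L : Submodule ℝ (Module.Dual ℝ V))
    (D : Set (Module.Dual ℝ V)) (n₀ : ℕ)
    (hcl : scl^[n₀] ((Submodule.span ℝ D : Submodule ℝ (Module.Dual ℝ V)) :
        Set (Module.Dual ℝ V)) = L)
    (u : Ω → V) (hmeas : ∀ ℓ ∈ D, Measurable fun ω => ℓ (u ω)) :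
    @Measurable Ω V _
      (⨆ ℓ ∈ (L : Set (Module.Dual ℝ V)),
        MeasurableSpace.comap (ℓ : V → ℝ) inferInstance) u := by
  have hspan : (Submodule.span ℝ D : Set (Module.Dual ℝ V)) ⊆ measurableFunctionals u :=
    Submodule.span_le.mpr hmeas
  have hL : (L : Set (Module.Dual ℝ V)) ⊆ measurableFunctionals u :=
    hcl ▸ iterate_scl_subset_measurableFunctionals hspan n₀
  exact (measurable_biSup_comap_iff _ (fun ℓ : Module.Dual ℝ V => (ℓ : V → ℝ)) u).mpr hL

theorem stmt5 {V Ω : Type*} [AddCommGroup V] [Module ℝ V] [MeasurableSpace Ω]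
    (L : Submodule ℝ (Module.Dual ℝ V))
    (hsep : ∀ v : V, v ≠ 0 → ∃ ℓ ∈ L, ℓ v ≠ 0)
    (D : Set (Module.Dual ℝ V)) (hDL : D ⊆ L) (n₀ : ℕ)
    (hcl : scl^[n₀] ((Submodule.span ℝ D : Submodule ℝ (Module.Dual ℝ V)) :
        Set (Module.Dual ℝ V)) = L)
    (u : Ω → V) (hmeas : ∀ ℓ ∈ D, Measurable fun ω => ℓ (u ω)) :
    @Measurable Ω V _
      (⨆ ℓ ∈ (L : Set (Module.Dual ℝ V)),
        MeasurableSpace.comap (ℓ : V → ℝ) inferInstance) u :=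
  stmt5_general L D n₀ hcl u hmeas
end

section
/- Let V be a real vector space, L ⊆ V^# a subspace separating points, and D ⊆ L such that the n₀-fold weak-* sequential closure of span D equals L for some n₀ ∈ ℕ. If u : Ω → V satisfies that (ℓ₁∘u, ..., ℓₙ∘u) is jointly Gaussian in ℝⁿ for all n and all ℓ₁,...,ℓₙ ∈ D, then u is a Gaussian random variable with values in (V, σ(L)), i.e., ℓ ∘ u is a univariate Gaussian random variable for every ℓ ∈ L. -/
open MeasureTheory ProbabilityTheory

/-- A real-valued random variable is (possibly degenerate) Gaussian. -/
def IsGaussianRV {Ω : Type*} [MeasurableSpace Ω] (P : Measure Ω) (f : Ω → ℝ) : Prop :=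
  ∃ (m : ℝ) (v : NNReal), Measure.map f P = gaussianReal m v

/-!
Every functional in the span of `D` is Gaussian along `u` by hypothesis, and the class of
functionals `ℓ` for which `ℓ ∘ u` is a measurable Gaussian variable is stable under the weak-*
sequential closure, so it contains `L` after `n₀` steps. Stability means that a pointwise limit
`Y` of Gaussian variables `Xₙ ~ N(mₙ, vₙ)` is Gaussian. The characteristic functions
`exp (i t mₙ - vₙ t² / 2)` converge to that of the law `μ` of `Y`, so the laws of the `Xₙ` are
tight; this bounds the means, since a Gaussian gives mass `≥ 1/2` to each side of its mean. The
variances are eventually bounded because `|φ_μ(t)| > 1/2` for some `t ≠ 0`. Along a subsequence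
`(mₙ, vₙ) → (m, v)`, and then `μ` has the characteristic function of `N(m, v)`.
-/

open Filter Set Topology Complex
open scoped NNReal RealInnerProductSpace

section GaussianReal

lemma gaussianReal_Iic_self_eq_Ici (m : ℝ) (v : ℝ≥0) :
    gaussianReal m v (Iic m) = gaussianReal m v (Ici m) := by
  have hsymm : (gaussianReal m v).map (2 * m - ·) = gaussianReal m v := by
    rw [gaussianReal_map_const_sub]; ring_nf
  conv_lhs => rw [← hsymm]
  rw [Measure.map_apply (by fun_prop) measurableSet_Iic]
  congr 1
  ext x
  simp only [mem_preimage, mem_Iic, mem_Ici]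
  constructor <;> intro h <;> linarith

lemma inv_two_le_gaussianReal_Iic_self (m : ℝ) (v : ℝ≥0) : 2⁻¹ ≤ gaussianReal m v (Iic m) := by
  have h : 1 ≤ gaussianReal m v (Iic m) + gaussianReal m v (Ici m) :=
    calc (1 : ENNReal) = gaussianReal m v (Iic m ∪ Ici m) := by simp
      _ ≤ _ := measure_union_le _ _
  rw [← gaussianReal_Iic_self_eq_Ici, ← two_mul] at h
  exact (ENNReal.inv_le_iff_le_mul (by simp) (by simp)).2 h

lemma inv_two_le_gaussianReal_Ici_self (m : ℝ) (v : ℝ≥0) : 2⁻¹ ≤ gaussianReal m v (Ici m) :=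
  gaussianReal_Iic_self_eq_Ici m v ▸ inv_two_le_gaussianReal_Iic_self m v

lemma abs_le_of_gaussianReal_compl_closedBall_lt {m r : ℝ} {v : ℝ≥0}
    (h : gaussianReal m v (Metric.closedBall 0 r)ᶜ < 2⁻¹) : |m| ≤ r := by
  by_contra! hr
  refine h.not_ge ?_
  rcases lt_abs.mp hr with hm | hm
  · refine (inv_two_le_gaussianReal_Ici_self m v).trans (measure_mono fun x hx ↦ ?_)
    simp only [mem_compl_iff, Metric.mem_closedBall, dist_zero_right, Real.norm_eq_abs, not_le]
    exact hm.trans_le (hx.out.trans (le_abs_self x))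
  · refine (inv_two_le_gaussianReal_Iic_self m v).trans (measure_mono fun x hx ↦ ?_)
    simp only [mem_compl_iff, Metric.mem_closedBall, dist_zero_right, Real.norm_eq_abs, not_le]
    exact hm.trans_le ((neg_le_neg hx.out).trans (neg_le_abs x))

lemma norm_charFun_gaussianReal (m : ℝ) (v : ℝ≥0) (t : ℝ) :
    ‖charFun (gaussianReal m v) t‖ = Real.exp (-(v * t ^ 2 / 2)) := by
  rw [charFun_gaussianReal, Complex.norm_exp]
  congr 1
  simp [← Complex.ofReal_pow]

end GaussianReal

section LimitsOfGaussians

variable {μ : Measure ℝ} [IsProbabilityMeasure μ] {m : ℕ → ℝ} {v : ℕ → ℝ≥0}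

lemma exists_forall_abs_le_of_tendsto_charFun_gaussianReal
    (h : ∀ t, Tendsto (fun n ↦ charFun (gaussianReal (m n) (v n)) t) atTop (𝓝 (charFun μ t))) :
    ∃ r, ∀ n, |m n| ≤ r := by
  have hT := isTightMeasureSet_of_tendsto_charFun continuous_charFun.continuousAt h
  obtain ⟨r, hr⟩ := ((tendsto_measure_compl_closedBall_of_isTightMeasureSet hT 0).eventually
    (gt_mem_nhds (by norm_num : (0 : ENNReal) < 2⁻¹))).exists
  exact ⟨r, fun n ↦ abs_le_of_gaussianReal_compl_closedBall_lt
    ((le_biSup (fun ν : Measure ℝ ↦ ν (Metric.closedBall 0 r)ᶜ) (mem_range_self n)).trans_lt hr)⟩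

lemma exists_eventually_le_of_tendsto_charFun_gaussianReal
    (h : ∀ t, Tendsto (fun n ↦ charFun (gaussianReal (m n) (v n)) t) atTop (𝓝 (charFun μ t))) :
    ∃ B, ∀ᶠ n in atTop, (v n : ℝ) ≤ B := by
  have h0 : Tendsto (fun t ↦ ‖charFun μ t‖) (𝓝[≠] 0) (𝓝 1) := by
    simpa using ((continuous_charFun (μ := μ)).norm.tendsto 0).mono_left nhdsWithin_le_nhds
  obtain ⟨t, ht, ht0⟩ := ((h0.eventually (lt_mem_nhds (by norm_num : (2⁻¹ : ℝ) < 1))).and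
    self_mem_nhdsWithin).exists
  have ht0 : t ≠ 0 := ht0
  refine ⟨2 / t ^ 2, ?_⟩
  filter_upwards [(h t).norm.eventually (lt_mem_nhds ht)] with n hn
  rw [norm_charFun_gaussianReal, Real.exp_neg, inv_lt_inv₀ two_pos (Real.exp_pos _)] at hn
  have := Real.add_one_le_exp (v n * t ^ 2 / 2)
  rw [le_div_iff₀ (by positivity)]
  linarith

theorem exists_eq_gaussianReal_of_tendsto_charFun
    (h : ∀ t, Tendsto (fun n ↦ charFun (gaussianReal (m n) (v n)) t) atTop (𝓝 (charFun μ t))) :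
    ∃ m₀ v₀, μ = gaussianReal m₀ v₀ := by
  obtain ⟨r, hr⟩ := exists_forall_abs_le_of_tendsto_charFun_gaussianReal h
  obtain ⟨B, hB⟩ := exists_eventually_le_of_tendsto_charFun_gaussianReal h
  obtain ⟨⟨m₀, w⟩, -, φ, hφ, hlim⟩ := tendsto_subseq_of_frequently_bounded
    ((Metric.isBounded_Icc (-r) r).prod (Metric.isBounded_Icc 0 B))
    (x := fun n ↦ (m n, (v n : ℝ)))
    (hB.mono fun n hn ↦ ⟨abs_le.mp (hr n), (v n).2, hn⟩).frequently
  have hw : 0 ≤ w := ge_of_tendsto' ((continuous_snd.tendsto _).comp hlim) fun n ↦ (v (φ n)).2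
  refine ⟨m₀, w.toNNReal, Measure.ext_of_charFun (funext fun t ↦ ?_)⟩
  refine tendsto_nhds_unique ((h t).comp hφ.tendsto_atTop) ?_
  simp_rw [Function.comp_def, charFun_gaussianReal, Real.coe_toNNReal w hw]
  have hg : Continuous fun p : ℝ × ℝ ↦ cexp (t * p.1 * I - p.2 * t ^ 2 / 2) := by fun_prop
  simpa only [Function.comp_def] using (hg.tendsto (m₀, w)).comp hlim

end LimitsOfGaussians

lemma tendsto_charFun_map_of_tendsto {Ω E : Type*} [MeasurableSpace Ω] [NormedAddCommGroup E]
    [InnerProductSpace ℝ E] [MeasurableSpace E] [OpensMeasurableSpace E]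
    {P : Measure Ω} [IsFiniteMeasure P] {X : ℕ → Ω → E} {Y : Ω → E}
    (hX : ∀ n, AEMeasurable (X n) P) (hY : AEMeasurable Y P)
    (hlim : ∀ᵐ ω ∂P, Tendsto (X · ω) atTop (𝓝 (Y ω))) (t : E) :
    Tendsto (fun n ↦ charFun (P.map (X n)) t) atTop (𝓝 (charFun (P.map Y) t)) := by
  have hc : Continuous fun x : E ↦ cexp (⟪x, t⟫ * I) := by fun_prop
  simp_rw [charFun_apply, integral_map (hX _) hc.aestronglyMeasurable,
    integral_map hY hc.aestronglyMeasurable]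
  refine tendsto_integral_of_dominated_convergence (fun _ ↦ 1)
    (fun n ↦ (hc.measurable.comp_aemeasurable (hX n)).aestronglyMeasurable) (integrable_const 1)
    (fun n ↦ .of_forall fun ω ↦ (Complex.norm_exp_ofReal_mul_I _).le)
    (hlim.mono fun ω hω ↦ (hc.tendsto _).comp hω)

lemma IsGaussianRV.aemeasurable {Ω : Type*} [MeasurableSpace Ω] {P : Measure Ω}
    {f : Ω → ℝ} (hf : IsGaussianRV P f) : AEMeasurable f P := by
  obtain ⟨m, v, h⟩ := hf
  exact aemeasurable_of_map_neZero (h ▸ inferInstance)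

theorem IsGaussianRV.of_tendsto {Ω : Type*} [MeasurableSpace Ω] {P : Measure Ω}
    [IsProbabilityMeasure P] {X : ℕ → Ω → ℝ} {Y : Ω → ℝ} (hX : ∀ n, IsGaussianRV P (X n))
    (hlim : ∀ᵐ ω ∂P, Tendsto (X · ω) atTop (𝓝 (Y ω))) : IsGaussianRV P Y := by
  have hXm n := (hX n).aemeasurable
  have hY := aemeasurable_of_tendsto_metrizable_ae' hXm hlim
  have := Measure.isProbabilityMeasure_map hY
  choose m v hmv using hX
  refine exists_eq_gaussianReal_of_tendsto_charFun (m := m) (v := v) fun t ↦ ?_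
  simpa only [hmv] using tendsto_charFun_map_of_tendsto hXm hY hlim t

lemma measurable_biSup_comap {α β γ ι : Type*} [MeasurableSpace α] [m : MeasurableSpace γ]
    {s : Set ι} {f : ι → β → γ} {u : α → β} (h : ∀ i ∈ s, Measurable (f i ∘ u)) :
    Measurable[_, ⨆ i ∈ s, m.comap (f i)] u := by
  refine measurable_iff_le_map.2 (iSup₂_le fun i hi ↦ ?_)
  rw [← MeasurableSpace.comap_le_iff_le_map, MeasurableSpace.comap_comp]
  exact (h i hi).comap_le

section GaussianFunctionals

variable {V Ω : Type*} [AddCommGroup V] [Module ℝ V] [MeasurableSpace Ω] {P : Measure Ω}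
  {u : Ω → V}

variable (P u) in
def gaussianFunctionals : Set (Module.Dual ℝ V) :=
  {ℓ | Measurable (fun ω ↦ ℓ (u ω)) ∧ IsGaussianRV P (fun ω ↦ ℓ (u ω))}

lemma span_subset_gaussianFunctionals {D : Set (Module.Dual ℝ V)}
    (hmeas : ∀ ℓ ∈ D, Measurable fun ω ↦ ℓ (u ω))
    (hGauss : ∀ (n : ℕ) (ℓs : Fin n → Module.Dual ℝ V), (∀ i, ℓs i ∈ D) →
      ∀ c : Fin n → ℝ, IsGaussianRV P fun ω ↦ ∑ i, c i * ℓs i (u ω)) :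
    (Submodule.span ℝ D : Set (Module.Dual ℝ V)) ⊆ gaussianFunctionals P u := by
  intro ℓ hℓ
  obtain ⟨n, c, ℓs, rfl⟩ := Submodule.mem_span_set'.1 hℓ
  have hsum : (fun ω ↦ (∑ i, c i • (ℓs i : Module.Dual ℝ V)) (u ω)) =
      fun ω ↦ ∑ i, c i * (ℓs i : Module.Dual ℝ V) (u ω) := by
    ext; simp
  rw [gaussianFunctionals, mem_ofPred_eq, hsum]
  exact ⟨Finset.measurable_sum _ fun i _ ↦ (hmeas _ (ℓs i).2).const_mul _,
    hGauss n (fun i ↦ ℓs i) (fun i ↦ (ℓs i).2) c⟩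

lemma scl_subset_gaussianFunctionals [IsProbabilityMeasure P] {S : Set (Module.Dual ℝ V)}
    (hS : S ⊆ gaussianFunctionals P u) : scl S ⊆ gaussianFunctionals P u := by
  rintro ℓ ⟨g, hgS, hg⟩
  exact ⟨measurable_of_tendsto_metrizable (fun n ↦ (hS (hgS n)).1)
      (tendsto_pi_nhds.2 fun ω ↦ hg (u ω)),
    IsGaussianRV.of_tendsto (fun n ↦ (hS (hgS n)).2) (.of_forall fun ω ↦ hg (u ω))⟩

end GaussianFunctionals

theorem stmt6_general {V Ω : Type*} [AddCommGroup V] [Module ℝ V] [MeasurableSpace Ω]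
    (P : Measure Ω) [IsProbabilityMeasure P]
    (L : Submodule ℝ (Module.Dual ℝ V))
    (D : Set (Module.Dual ℝ V)) (n₀ : ℕ)
    (hcl : scl^[n₀] ((Submodule.span ℝ D : Submodule ℝ (Module.Dual ℝ V)) :
        Set (Module.Dual ℝ V)) = L)
    (u : Ω → V)
    (hmeas : ∀ ℓ ∈ D, Measurable fun ω => ℓ (u ω))
    (hGauss : ∀ (n : ℕ) (ℓs : Fin n → Module.Dual ℝ V), (∀ i, ℓs i ∈ D) →
      ∀ c : Fin n → ℝ, IsGaussianRV P fun ω => ∑ i, c i * ℓs i (u ω)) :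
    (@Measurable Ω V _
      (⨆ ℓ ∈ (L : Set (Module.Dual ℝ V)),
        MeasurableSpace.comap (ℓ : V → ℝ) inferInstance) u) ∧
    ∀ ℓ ∈ L, IsGaussianRV P fun ω => ℓ (u ω) := by
  have hstable : MapsTo scl (Iic (gaussianFunctionals P u)) (Iic (gaussianFunctionals P u)) :=
    fun _ ↦ scl_subset_gaussianFunctionals
  have hL : (L : Set (Module.Dual ℝ V)) ⊆ gaussianFunctionals P u :=
    hcl ▸ hstable.iterate n₀ (span_subset_gaussianFunctionals hmeas hGauss)
  exact ⟨measurable_biSup_comap fun ℓ hℓ ↦ (hL hℓ).1, fun ℓ hℓ ↦ (hL hℓ).2⟩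

theorem stmt6 {V Ω : Type*} [AddCommGroup V] [Module ℝ V] [MeasurableSpace Ω]
    (P : Measure Ω) [IsProbabilityMeasure P]
    (L : Submodule ℝ (Module.Dual ℝ V))
    (hsep : ∀ v : V, v ≠ 0 → ∃ ℓ ∈ L, ℓ v ≠ 0)
    (D : Set (Module.Dual ℝ V)) (hDL : D ⊆ L) (n₀ : ℕ)
    (hcl : scl^[n₀] ((Submodule.span ℝ D : Submodule ℝ (Module.Dual ℝ V)) :
        Set (Module.Dual ℝ V)) = L)
    (u : Ω → V)
    (hmeas : ∀ ℓ ∈ D, Measurable fun ω => ℓ (u ω))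
    (hGauss : ∀ (n : ℕ) (ℓs : Fin n → Module.Dual ℝ V), (∀ i, ℓs i ∈ D) →
      ∀ c : Fin n → ℝ, IsGaussianRV P fun ω => ∑ i, c i * ℓs i (u ω)) :
    (@Measurable Ω V _
      (⨆ ℓ ∈ (L : Set (Module.Dual ℝ V)),
        MeasurableSpace.comap (ℓ : V → ℝ) inferInstance) u) ∧
    ∀ ℓ ∈ L, IsGaussianRV P fun ω => ℓ (u ω) :=
  stmt6_general P L D n₀ hcl u hmeas hGauss
end

section
/- Let H be a separable real Hilbert space, G ⊆ L²(Ω,𝒜,ℙ) a Gaussian Hilbert space, and Ξ : A → (H → G) an operator-valued Gaussian process (each Ξ(a) a bounded linear operator) with mean m : A → H and covariance kernel k : A × A → (H → H) such that k(a,a) is trace class for every a ∈ A. Then there exists an H-valued Gaussian process h on (Ω,𝒜,ℙ) with mean function m and covariance function k such that for all a ∈ A and u ∈ H, ⟨u, h(a)⟩_H = Ξ(a)(u) almost surely (as elements of L²). -/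
/-!
Fix `a` and the eigenbasis `ψ` of `k(a,a)`. The coordinates `ξᵢ = Ξ(a)ψᵢ` have second moments
`λᵢ + ⟪ψᵢ, m a⟫²`, summable by the trace condition and Bessel's inequality, so `∑ ξᵢ²` is finite
almost surely and `h(a) = ∑ ξᵢ ψᵢ` converges almost surely in `H`. For `u ∈ H` the series
`∑ ⟪ψᵢ, u⟫ ξᵢ` converges to `Ξ(a)u` in `L²` and pointwise to `⟪u, h(a)⟫`; a subsequence of the
partial sums converges almost surely, so both limits agree. Gaussianity, mean and covariance of `h`
are then inherited from `Ξ`, since finite sums of the `Ξ(aᵢ)uᵢ` stay in `G`.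
-/

open MeasureTheory ProbabilityTheory Filter Finset
open scoped ENNReal

namespace MeasureTheory

variable {X : Type*} [MeasurableSpace X] {μ : Measure X}

theorem ae_summable_of_summable_integral {ι : Type*} [Countable ι] {f : ι → X → ℝ}
    (hf : ∀ i, Integrable (f i) μ) (hf0 : ∀ i, 0 ≤ᵐ[μ] f i)
    (hs : Summable fun i => ∫ x, f i x ∂μ) :
    ∀ᵐ x ∂μ, Summable fun i => f i x := by
  have hnorm : ∀ i, eLpNorm (f i) 1 μ = ENNReal.ofReal (∫ x, f i x ∂μ) := fun i => by
    rw [eLpNorm_one_eq_lintegral_enorm, ofReal_integral_eq_lintegral_ofReal (hf i) (hf0 i)]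
    refine lintegral_congr_ae ?_
    filter_upwards [hf0 i] with x hx
    exact Real.enorm_of_nonneg hx
  have hfin : ∑' i, eLpNorm (f i) 1 μ ≠ ∞ := by
    simp_rw [hnorm]
    rw [← ENNReal.ofReal_tsum_of_nonneg (fun i => integral_nonneg_of_ae (hf0 i)) hs]
    exact ENNReal.ofReal_ne_top
  filter_upwards [summable_norm_of_tsum_eLpNorm_ne_top le_rfl
    (fun i => (hf i).aestronglyMeasurable) hfin] with x hx using hx.of_norm

theorem Lp.ae_eq_of_hasSum_of_ae_hasSum {E : Type*} [NormedAddCommGroup E] {p : ℝ≥0∞}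
    [Fact (1 ≤ p)] {f : ℕ → Lp E p μ} {F : Lp E p μ} {G : X → E} (hF : HasSum f F)
    (hG : ∀ᵐ x ∂μ, HasSum (fun n => f n x) (G x)) : F =ᵐ[μ] G := by
  have hpartial : ∀ᵐ x ∂μ, ∀ n, (∑ i ∈ range n, f i : Lp E p μ) x = ∑ i ∈ range n, f i x :=
    ae_all_iff.2 fun n => Lp.coeFn_fun_finsetSum _ _
  obtain ⟨ns, hns, hlim⟩ :=
    (tendstoInMeasure_of_tendsto_Lp hF.tendsto_sum_nat).exists_seq_tendsto_ae
  filter_upwards [hpartial, hlim, hG] with x hx hxF hxG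
  refine tendsto_nhds_unique hxF ?_
  simpa only [hx, Function.comp_def] using hxG.tendsto_sum_nat.comp hns.tendsto_atTop

end MeasureTheory

theorem HilbertBasis.summable_smul_of_summable_sq {ι E : Type*} [NormedAddCommGroup E]
    [InnerProductSpace ℝ E] (b : HilbertBasis ι ℝ E) {c : ι → ℝ}
    (hc : Summable fun i => c i ^ 2) : Summable fun i => c i • b i := by
  have hmem : Memℓp c 2 := by
    refine memℓp_gen ?_
    simpa [Real.norm_eq_abs, sq_abs] using hc
  exact (b.hasSum_repr_symm ⟨c, hmem⟩).summable

theorem ContinuousLinearMap.exists_ae_inner_eq_of_summable_integral_sq {X H : Type*}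
    [MeasurableSpace X] {μ : Measure X} [NormedAddCommGroup H] [InnerProductSpace ℝ H]
    (T : H →L[ℝ] Lp ℝ 2 μ) (b : HilbertBasis ℕ ℝ H)
    (hT : Summable fun i => ∫ x, (T (b i) : X → ℝ) x ^ 2 ∂μ) :
    ∃ g : X → H, ∀ u, (fun x => inner ℝ u (g x)) =ᵐ[μ] T u := by
  set ξ : ℕ → X → ℝ := fun i => T (b i)
  have hsq : ∀ᵐ x ∂μ, Summable fun i => ξ i x ^ 2 :=
    ae_summable_of_summable_integral (fun i => (Lp.memLp _).integrable_sq)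
      (fun i => ae_of_all _ fun x => sq_nonneg _) hT
  refine ⟨fun x => ∑' i, ξ i x • b i, fun u => ?_⟩
  have hL2 : HasSum (fun i => inner ℝ (b i) u • T (b i)) (T u) := by
    simpa [b.repr_apply_apply] using (b.hasSum_repr u).mapL T
  have hcoe : ∀ᵐ x ∂μ, ∀ i, (inner ℝ (b i) u • T (b i) : Lp ℝ 2 μ) x = inner ℝ (b i) u * ξ i x :=
    ae_all_iff.2 fun i => Lp.coeFn_smul _ _
  refine (Lp.ae_eq_of_hasSum_of_ae_hasSum hL2 ?_).symm
  filter_upwards [hsq, hcoe] with x hx hxc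
  simp only [hxc]
  have := (b.summable_smul_of_summable_sq hx).hasSum.mapL (innerSL ℝ u)
  simpa [real_inner_smul_right, real_inner_comm, mul_comm] using this

theorem ProbabilityTheory.integral_sq_eq_integral_sub_mul_sub_add_sq {X : Type*} [MeasurableSpace X]
    {μ : Measure X} [IsProbabilityMeasure μ] {Y : X → ℝ} (hY : MemLp Y 2 μ) :
    ∫ x, Y x ^ 2 ∂μ = ∫ x, (Y x - μ[Y]) * (Y x - μ[Y]) ∂μ + μ[Y] ^ 2 := by
  have h := (variance_eq_sub hY).symm.trans (variance_eq_integral hY.aemeasurable)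
  simp only [Pi.pow_apply, ← sq] at h ⊢
  linarith

theorem stmt17_general {A Ω H : Type*} [NormedAddCommGroup H] [InnerProductSpace ℝ H]
    [CompleteSpace H] [MeasurableSpace Ω]
    (P : Measure Ω) [IsProbabilityMeasure P]
    -- G ⊆ L²(Ω,ℙ) a Gaussian Hilbert space (closed, all elements Gaussian)
    (G : Submodule ℝ (Lp ℝ 2 P))
    (hGgauss : ∀ g ∈ G, ∃ (mg : ℝ) (vg : NNReal),
      Measure.map (g : Ω → ℝ) P = gaussianReal mg vg)
    -- Ξ : A → (H → G) an operator-valued Gaussian process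
    (Ξ : A → H →L[ℝ] Lp ℝ 2 P) (hrange : ∀ (a : A) (u : H), Ξ a u ∈ G)
    -- with mean m and covariance kernel k
    (m : A → H)
    (hm : ∀ (a : A) (u : H), ∫ ω, (Ξ a u : Ω → ℝ) ω ∂P = (inner ℝ u (m a) : ℝ))
    (k : A → A → H →L[ℝ] H)
    (hk : ∀ (a₁ a₂ : A) (u₁ u₂ : H),
      ∫ ω, ((Ξ a₁ u₁ : Ω → ℝ) ω - (inner ℝ u₁ (m a₁) : ℝ)) *
            ((Ξ a₂ u₂ : Ω → ℝ) ω - (inner ℝ u₂ (m a₂) : ℝ)) ∂P = (inner ℝ u₁ (k a₁ a₂ u₂) : ℝ))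
    -- k(a,a) trace class for every a (spectral characterization)
    (htr : ∀ a : A, ∃ (ψ : ℕ → H) (lam : ℕ → ℝ), Orthonormal ℝ ψ ∧
      (∀ i, 0 ≤ lam i) ∧ (∀ i, k a a (ψ i) = lam i • ψ i) ∧
      Submodule.topologicalClosure (Submodule.span ℝ (Set.range ψ)) = ⊤ ∧ Summable lam) :
    -- then there is an H-valued Gaussian process h with mean m and covariance k
    -- such that ⟨u, h(a)⟩ = Ξ(a)(u) almost surely
    ∃ h : A → Ω → H,
      (∀ (a : A) (u : H),
        (fun ω => (inner ℝ u (h a ω) : ℝ)) =ᵐ[P] (Ξ a u : Ω → ℝ)) ∧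
      (∀ (n : ℕ) (as : Fin n → A) (us : Fin n → H),
        ∃ (mg : ℝ) (vg : NNReal),
          Measure.map (fun ω => ∑ i, (inner ℝ (us i) (h (as i) ω) : ℝ)) P =
            gaussianReal mg vg) ∧
      (∀ (a : A) (u : H), ∫ ω, (inner ℝ u (h a ω) : ℝ) ∂P = (inner ℝ u (m a) : ℝ)) ∧
      (∀ (a₁ a₂ : A) (u₁ u₂ : H),
        ∫ ω, ((inner ℝ u₁ (h a₁ ω) : ℝ) - (inner ℝ u₁ (m a₁) : ℝ)) *
              ((inner ℝ u₂ (h a₂ ω) : ℝ) - (inner ℝ u₂ (m a₂) : ℝ)) ∂P =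
          (inner ℝ u₁ (k a₁ a₂ u₂) : ℝ)) := by
  have hrepr : ∀ a, ∃ g : Ω → H, ∀ u, (fun ω => inner ℝ u (g ω)) =ᵐ[P] Ξ a u := by
    intro a
    obtain ⟨ψ, lam, hψ, -, heig, hspan, hlam⟩ := htr a
    have hsecond : ∀ i, ∫ ω, (Ξ a (ψ i) : Ω → ℝ) ω ^ 2 ∂P = lam i + inner ℝ (ψ i) (m a) ^ 2 := by
      intro i
      rw [integral_sq_eq_integral_sub_mul_sub_add_sq (Lp.memLp _), hm, hk, heig,
        real_inner_smul_right, real_inner_self_eq_norm_sq, hψ.1 i]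
      ring
    refine (Ξ a).exists_ae_inner_eq_of_summable_integral_sq (HilbertBasis.mk hψ hspan.ge) ?_
    simpa [hsecond, Real.norm_eq_abs, sq_abs] using hlam.add (hψ.inner_products_summable (m a))
  choose h hh using hrepr
  refine ⟨h, hh, fun n as us => ?_, fun a u => ?_, fun a₁ a₂ u₁ u₂ => ?_⟩
  · obtain ⟨mg, vg, hmap⟩ :=
      hGgauss (∑ i, Ξ (as i) (us i)) (G.sum_mem fun i _ => hrange (as i) (us i))
    refine ⟨mg, vg, hmap ▸ Measure.map_congr ?_⟩
    filter_upwards [Lp.coeFn_fun_finsetSum univ fun i => Ξ (as i) (us i),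
      ae_all_iff.2 fun i => hh (as i) (us i)] with ω hsum hω
    rw [hsum]
    exact sum_congr rfl fun i _ => hω i
  · rw [integral_congr_ae (hh a u), hm]
  · rw [← hk]
    refine integral_congr_ae ?_
    filter_upwards [hh a₁ u₁, hh a₂ u₂] with ω h₁ h₂
    rw [h₁, h₂]

theorem stmt17 {A Ω H : Type*} [NormedAddCommGroup H] [InnerProductSpace ℝ H]
    [CompleteSpace H] [TopologicalSpace.SeparableSpace H] [MeasurableSpace Ω]
    (P : Measure Ω) [IsProbabilityMeasure P]
    -- G ⊆ L²(Ω,ℙ) a Gaussian Hilbert space (closed, all elements Gaussian)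
    (G : Submodule ℝ (Lp ℝ 2 P)) (hGclosed : IsClosed (G : Set (Lp ℝ 2 P)))
    (hGgauss : ∀ g ∈ G, ∃ (mg : ℝ) (vg : NNReal),
      Measure.map (g : Ω → ℝ) P = gaussianReal mg vg)
    -- Ξ : A → (H → G) an operator-valued Gaussian process
    (Ξ : A → H →L[ℝ] Lp ℝ 2 P) (hrange : ∀ (a : A) (u : H), Ξ a u ∈ G)
    -- with mean m and covariance kernel k
    (m : A → H)
    (hm : ∀ (a : A) (u : H), ∫ ω, (Ξ a u : Ω → ℝ) ω ∂P = (inner ℝ u (m a) : ℝ))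
    (k : A → A → H →L[ℝ] H)
    (hk : ∀ (a₁ a₂ : A) (u₁ u₂ : H),
      ∫ ω, ((Ξ a₁ u₁ : Ω → ℝ) ω - (inner ℝ u₁ (m a₁) : ℝ)) *
            ((Ξ a₂ u₂ : Ω → ℝ) ω - (inner ℝ u₂ (m a₂) : ℝ)) ∂P = (inner ℝ u₁ (k a₁ a₂ u₂) : ℝ))
    (hksym : ∀ (a₁ a₂ : A) (u₁ u₂ : H),
      (inner ℝ u₁ (k a₁ a₂ u₂) : ℝ) = (inner ℝ (k a₂ a₁ u₁) u₂ : ℝ))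
    -- k(a,a) trace class for every a (spectral characterization)
    (htr : ∀ a : A, ∃ (ψ : ℕ → H) (lam : ℕ → ℝ), Orthonormal ℝ ψ ∧
      (∀ i, 0 ≤ lam i) ∧ (∀ i, k a a (ψ i) = lam i • ψ i) ∧
      Submodule.topologicalClosure (Submodule.span ℝ (Set.range ψ)) = ⊤ ∧ Summable lam) :
    -- then there is an H-valued Gaussian process h with mean m and covariance k
    -- such that ⟨u, h(a)⟩ = Ξ(a)(u) almost surely
    ∃ h : A → Ω → H,
      (∀ (a : A) (u : H),
        (fun ω => (inner ℝ u (h a ω) : ℝ)) =ᵐ[P] (Ξ a u : Ω → ℝ)) ∧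
      (∀ (n : ℕ) (as : Fin n → A) (us : Fin n → H),
        ∃ (mg : ℝ) (vg : NNReal),
          Measure.map (fun ω => ∑ i, (inner ℝ (us i) (h (as i) ω) : ℝ)) P =
            gaussianReal mg vg) ∧
      (∀ (a : A) (u : H), ∫ ω, (inner ℝ u (h a ω) : ℝ) ∂P = (inner ℝ u (m a) : ℝ)) ∧
      (∀ (a₁ a₂ : A) (u₁ u₂ : H),
        ∫ ω, ((inner ℝ u₁ (h a₁ ω) : ℝ) - (inner ℝ u₁ (m a₁) : ℝ)) *
              ((inner ℝ u₂ (h a₂ ω) : ℝ) - (inner ℝ u₂ (m a₂) : ℝ)) ∂P =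
          (inner ℝ u₁ (k a₁ a₂ u₂) : ℝ)) :=
  stmt17_general P G hGgauss Ξ hrange m hm k hk htr
end
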